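/- arXiv:1904.08614 — 6 statements merged into one kernel-verified Lean document; each statement's English description precedes it below -/
import Mathlib

section
/- Let 1 ≤ k_t ≤ M and 1 ≤ k_r ≤ N be integers. A selection matrix C belongs to the factored feasible set F_fct(k_t,k_r) if and only if C satisfies all four of the following conditions: (i) Σ_{j=1}^{M} col_j(C)² + Σ_{i=1}^{N} row_i(C)² = k_r·k_t·(k_r + k_t); (ii) col_j(C) ≤ k_r for every j; (iii) row_i(C) ≤ k_t for every i; (iv) |C| = k_t·k_r. -/
/-- For a selection matrix `C` (an `N × M` matrix with entries in `{0,1}`),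
membership in the factored feasible set `F_fct(k_t, k_r)` (i.e. `C i j = r i * t j` for some
binary vectors `r`, `t` with row/column budgets `k_r`, `k_t`) is equivalent to the four
conditions (i)–(iv). -/
theorem factored_feasible_iff (M N : ℕ) (hM : 0 < M) (hN : 0 < N)
    (kt kr : ℕ) (hkt1 : 1 ≤ kt) (hktM : kt ≤ M) (hkr1 : 1 ≤ kr) (hkrN : kr ≤ N)
    (C : Matrix (Fin N) (Fin M) ℕ) (hC : ∀ i j, C i j = 0 ∨ C i j = 1) :
    (∃ r : Fin N → ℕ, ∃ t : Fin M → ℕ,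
        (∀ i, r i = 0 ∨ r i = 1) ∧ (∑ i, r i = kr) ∧
        (∀ j, t j = 0 ∨ t j = 1) ∧ (∑ j, t j = kt) ∧
        (∀ i j, C i j = r i * t j))
      ↔ ((∑ j, (∑ i, C i j) ^ 2) + (∑ i, (∑ j, C i j) ^ 2) = kr * kt * (kr + kt)
          ∧ (∀ j, (∑ i, C i j) ≤ kr)
          ∧ (∀ i, (∑ j, C i j) ≤ kt)
          ∧ (∑ i, ∑ j, C i j) = kt * kr) := by
  constructor
  · rintro ⟨r, t, hr01, hrsum, ht01, htsum, hEq⟩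
    have hrow : ∀ i, (∑ j, C i j) = r i * kt := by
      intro i
      simp only [hEq, ← Finset.mul_sum, htsum]
    have hcol : ∀ j, (∑ i, C i j) = kr * t j := by
      intro j
      simp only [hEq]
      rw [← Finset.sum_mul, hrsum]
    have hr2 : ∀ i, r i ^ 2 = r i := fun i => by rcases hr01 i with h | h <;> simp [h]
    have ht2 : ∀ j, t j ^ 2 = t j := fun j => by rcases ht01 j with h | h <;> simp [h]
    refine ⟨?_, ?_, ?_, ?_⟩
    · have h1 : (∑ j, (∑ i, C i j) ^ 2) = kr ^ 2 * kt := by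
        simp only [hcol, mul_pow, ← Finset.mul_sum]
        rw [Finset.sum_congr rfl fun j _ => ht2 j, htsum]
      have h2 : (∑ i, (∑ j, C i j) ^ 2) = kt ^ 2 * kr := by
        simp only [hrow, mul_pow]
        rw [Finset.sum_congr rfl fun i _ => by rw [hr2 i], ← Finset.sum_mul, hrsum]
        ring
      rw [h1, h2]; ring
    · intro j
      rw [hcol j]
      rcases ht01 j with h | h <;> simp [h]
    · intro i
      rw [hrow i]
      rcases hr01 i with h | h <;> simp [h]
    · have : (∑ i, ∑ j, C i j) = ∑ i, r i * kt := Finset.sum_congr rfl fun i _ => hrow i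
      rw [this, ← Finset.sum_mul, hrsum, mul_comm]
  · rintro ⟨h1, h2, h3, h4⟩
    have hsumcol : (∑ j, ∑ i, C i j) = kt * kr := by
      rw [Finset.sum_comm]; exact h4
    -- dichotomy for columns and rows
    have e1 : (∑ j, (∑ i, C i j) ^ 2) + (∑ j, (∑ i, C i j) * (kr - ∑ i, C i j))
        = kr * (kt * kr) := by
      rw [← Finset.sum_add_distrib, ← hsumcol, Finset.mul_sum]
      refine Finset.sum_congr rfl fun j _ => ?_
      have h := h2 j
      rw [pow_two]
      rw [mul_comm kr]
      rw [← Nat.mul_add, Nat.add_sub_cancel' h]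
    have e2 : (∑ i, (∑ j, C i j) ^ 2) + (∑ i, (∑ j, C i j) * (kt - ∑ j, C i j))
        = kt * (kt * kr) := by
      rw [← Finset.sum_add_distrib, ← h4, Finset.mul_sum]
      refine Finset.sum_congr rfl fun i _ => ?_
      have h := h3 i
      rw [pow_two, mul_comm kt, ← Nat.mul_add, Nat.add_sub_cancel' h]
    have hP : kr * (kt * kr) + kt * (kt * kr) = kr * kt * (kr + kt) := by ring
    have hzero : (∑ j, (∑ i, C i j) * (kr - ∑ i, C i j))
        + (∑ i, (∑ j, C i j) * (kt - ∑ j, C i j)) = 0 := by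
      have key2 : ((∑ j, (∑ i, C i j) ^ 2) + (∑ j, (∑ i, C i j) * (kr - ∑ i, C i j)))
          + ((∑ i, (∑ j, C i j) ^ 2) + (∑ i, (∑ j, C i j) * (kt - ∑ j, C i j)))
          = (∑ j, (∑ i, C i j) ^ 2) + (∑ i, (∑ j, C i j) ^ 2) := by
        rw [e1, e2, h1, ← hP]
      omega
    have hcolz : ∀ j, (∑ i, C i j) * (kr - ∑ i, C i j) = 0 := by
      intro j
      have h0 : (∑ j, (∑ i, C i j) * (kr - ∑ i, C i j)) = 0 := by omega
      exact (Finset.sum_eq_zero_iff.mp h0) j (Finset.mem_univ j)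
    have hrowz : ∀ i, (∑ j, C i j) * (kt - ∑ j, C i j) = 0 := by
      intro i
      have h0 : (∑ i, (∑ j, C i j) * (kt - ∑ j, C i j)) = 0 := by omega
      exact (Finset.sum_eq_zero_iff.mp h0) i (Finset.mem_univ i)
    have hcold : ∀ j, (∑ i, C i j) = 0 ∨ (∑ i, C i j) = kr := by
      intro j
      rcases Nat.mul_eq_zero.mp (hcolz j) with h | h
      · exact Or.inl h
      · exact Or.inr (le_antisymm (h2 j) (Nat.le_of_sub_eq_zero h))
    have hrowd : ∀ i, (∑ j, C i j) = 0 ∨ (∑ j, C i j) = kt := by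
      intro i
      rcases Nat.mul_eq_zero.mp (hrowz i) with h | h
      · exact Or.inl h
      · exact Or.inr (le_antisymm (h3 i) (Nat.le_of_sub_eq_zero h))
    set r : Fin N → ℕ := fun i => if (∑ j, C i j) = kt then 1 else 0 with hrdef
    set t : Fin M → ℕ := fun j => if (∑ i, C i j) = kr then 1 else 0 with htdef
    have hrval : ∀ i, r i * kt = ∑ j, C i j := by
      intro i
      rcases hrowd i with h | h
      · simp [hrdef, h]; omega
      · simp [hrdef, h]
    have htval : ∀ j, kr * t j = ∑ i, C i j := by
      intro j
      rcases hcold j with h | h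
      · simp [htdef, h]; omega
      · simp [htdef, h]
    have hrsum : (∑ i, r i) = kr := by
      have : (∑ i, r i) * kt = kr * kt := by
        rw [Finset.sum_mul]
        calc (∑ i, r i * kt) = ∑ i, ∑ j, C i j :=
              Finset.sum_congr rfl fun i _ => hrval i
          _ = kt * kr := h4
          _ = kr * kt := mul_comm _ _
      exact Nat.eq_of_mul_eq_mul_right hkt1 this
    have htsum : (∑ j, t j) = kt := by
      have : kr * (∑ j, t j) = kr * kt := by
        rw [Finset.mul_sum]
        calc (∑ j, kr * t j) = ∑ j, ∑ i, C i j :=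
              Finset.sum_congr rfl fun j _ => htval j
          _ = kt * kr := hsumcol
          _ = kr * kt := mul_comm _ _
      exact Nat.eq_of_mul_eq_mul_left hkr1 this
    have hle : ∀ i j, C i j ≤ r i * t j := by
      intro i j
      rcases hC i j with h | h
      · simp [h]
      · have hri : r i = 1 := by
          have hrowpos : 1 ≤ ∑ j', C i j' := h ▸ Finset.single_le_sum
            (f := fun j' => C i j') (fun _ _ => Nat.zero_le _) (Finset.mem_univ j)
          rcases hrowd i with h' | h'
          · omega
          · simp [hrdef, h']
        have htj : t j = 1 := by
          have hcolpos : 1 ≤ ∑ i', C i' j := h ▸ Finset.single_le_sum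
            (f := fun i' => C i' j) (fun _ _ => Nat.zero_le _) (Finset.mem_univ i)
          rcases hcold j with h' | h'
          · omega
          · simp [htdef, h']
        simp [h, hri, htj]
    have hsumeq : (∑ i, ∑ j, C i j) = ∑ i, ∑ j, r i * t j := by
      rw [h4]
      calc kt * kr = kr * kt := mul_comm _ _
        _ = (∑ i, r i) * (∑ j, t j) := by rw [hrsum, htsum]
        _ = ∑ i, ∑ j, r i * t j := by rw [Finset.sum_mul_sum]
    have hrowle : ∀ i, (∑ j, C i j) ≤ ∑ j, r i * t j :=
      fun i => Finset.sum_le_sum fun j _ => hle i j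
    have houter := (Finset.sum_eq_sum_iff_of_le (fun i _ => hrowle i)).mp hsumeq
    refine ⟨r, t, fun i => ?_, hrsum, fun j => ?_, htsum, fun i j => ?_⟩
    · by_cases h : (∑ j, C i j) = kt <;> simp [hrdef, h]
    · by_cases h : (∑ i, C i j) = kr <;> simp [htdef, h]
    · exact (Finset.sum_eq_sum_iff_of_le (fun j _ => hle i j)).mp
        (houter i (Finset.mem_univ i)) j (Finset.mem_univ j)
end

section
/- Let k_t ≥ 1 and k_r ≥ 1 be integers and let ε_0, …, ε_{k_t−1} and ζ_0, …, ζ_{k_r−1} be nonnegative real numbers satisfying Σ_{i=0}^{k_t−1} ε_i·(k_t − i) = k_t·k_r, Σ_{i=0}^{k_r−1} ζ_i·(k_r − i) = k_t·k_r, and Σ_{i=0}^{k_t−1} ε_i·(k_t − i)² + Σ_{i=0}^{k_r−1} ζ_i·(k_r − i)² = k_r·k_t² + k_t·k_r². Then ε_0 = k_r, ζ_0 = k_t, and ε_i = 0 for all 1 ≤ i ≤ k_t−1 and ζ_i = 0 for all 1 ≤ i ≤ k_r−1. -/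
lemma factored_aux (k : ℕ) (hk : 1 ≤ k) (f : ℕ → ℝ) (hf : ∀ i, i < k → 0 ≤ f i)
    (hz : ∑ i ∈ Finset.range k, f i * ((k : ℝ) - (i : ℝ)) * (i : ℝ) = 0)
    (c : ℝ) (hlin : ∑ i ∈ Finset.range k, f i * ((k : ℝ) - (i : ℝ)) = (k : ℝ) * c) :
    f 0 = c ∧ ∀ i, 1 ≤ i → i < k → f i = 0 := by
  have hterm : ∀ i ∈ Finset.range k, f i * ((k : ℝ) - (i : ℝ)) * (i : ℝ) = 0 := by
    rw [← Finset.sum_eq_zero_iff_of_nonneg]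
    · exact hz
    · intro i hi
      have hik := Finset.mem_range.mp hi
      have h1 : 0 ≤ f i := hf i hik
      have h2 : (0:ℝ) ≤ (k : ℝ) - (i : ℝ) := by
        have : (i:ℝ) ≤ (k:ℝ) := by exact_mod_cast hik.le
        linarith
      positivity
  have hvanish : ∀ i, 1 ≤ i → i < k → f i = 0 := by
    intro i h1i hik
    have := hterm i (Finset.mem_range.mpr hik)
    have h2 : (0:ℝ) < (k : ℝ) - (i : ℝ) := by
      have : (i:ℝ) < (k:ℝ) := by exact_mod_cast hik
      linarith
    have h3 : (0:ℝ) < (i : ℝ) := by exact_mod_cast h1i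
    have := mul_eq_zero.mp this
    rcases this with h | h
    · rcases mul_eq_zero.mp h with h | h
      · exact h
      · linarith
    · linarith
  refine ⟨?_, hvanish⟩
  have hsum : ∑ i ∈ Finset.range k, f i * ((k : ℝ) - (i : ℝ)) = f 0 * ((k : ℝ) - ((0:ℕ) : ℝ)) := by
    apply Finset.sum_eq_single_of_mem
    · exact Finset.mem_range.mpr hk
    · intro i hi hne
      have hik := Finset.mem_range.mp hi
      rw [hvanish i (Nat.one_le_iff_ne_zero.mpr hne) hik, zero_mul]
  rw [hsum] at hlin
  norm_num at hlin
  have hkpos : (0:ℝ) < (k:ℝ) := by exact_mod_cast hk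
  nlinarith [hlin, hkpos]

/-- If nonnegative reals `ε_0, …, ε_{k_t−1}` and `ζ_0, …, ζ_{k_r−1}` satisfy the
two linear constraints and the quadratic constraint, then `ε_0 = k_r`, `ζ_0 = k_t`, and all
other `ε_i`, `ζ_i` vanish. -/
theorem factored_counting_solution (kt kr : ℕ) (hkt : 1 ≤ kt) (hkr : 1 ≤ kr)
    (ε ζ : ℕ → ℝ)
    (hε : ∀ i, i < kt → 0 ≤ ε i) (hζ : ∀ i, i < kr → 0 ≤ ζ i)
    (h1 : ∑ i ∈ Finset.range kt, ε i * ((kt : ℝ) - (i : ℝ)) = (kt : ℝ) * (kr : ℝ))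
    (h2 : ∑ i ∈ Finset.range kr, ζ i * ((kr : ℝ) - (i : ℝ)) = (kt : ℝ) * (kr : ℝ))
    (h3 : ∑ i ∈ Finset.range kt, ε i * ((kt : ℝ) - (i : ℝ)) ^ 2
        + ∑ i ∈ Finset.range kr, ζ i * ((kr : ℝ) - (i : ℝ)) ^ 2
        = (kr : ℝ) * (kt : ℝ) ^ 2 + (kt : ℝ) * (kr : ℝ) ^ 2) :
    ε 0 = (kr : ℝ) ∧ ζ 0 = (kt : ℝ)
      ∧ (∀ i, 1 ≤ i → i ≤ kt - 1 → ε i = 0)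
      ∧ (∀ i, 1 ≤ i → i ≤ kr - 1 → ζ i = 0) := by
  have hA : ∑ i ∈ Finset.range kt, ε i * ((kt : ℝ) - (i : ℝ)) * (i : ℝ)
      = (kt : ℝ) * ∑ i ∈ Finset.range kt, ε i * ((kt : ℝ) - (i : ℝ))
        - ∑ i ∈ Finset.range kt, ε i * ((kt : ℝ) - (i : ℝ)) ^ 2 := by
    rw [Finset.mul_sum, ← Finset.sum_sub_distrib]
    exact Finset.sum_congr rfl (fun i _ => by ring)
  have hB : ∑ i ∈ Finset.range kr, ζ i * ((kr : ℝ) - (i : ℝ)) * (i : ℝ)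
      = (kr : ℝ) * ∑ i ∈ Finset.range kr, ζ i * ((kr : ℝ) - (i : ℝ))
        - ∑ i ∈ Finset.range kr, ζ i * ((kr : ℝ) - (i : ℝ)) ^ 2 := by
    rw [Finset.mul_sum, ← Finset.sum_sub_distrib]
    exact Finset.sum_congr rfl (fun i _ => by ring)
  have hAnn : (0:ℝ) ≤ ∑ i ∈ Finset.range kt, ε i * ((kt : ℝ) - (i : ℝ)) * (i : ℝ) := by
    apply Finset.sum_nonneg
    intro i hi
    have hik := Finset.mem_range.mp hi
    have h1' : 0 ≤ ε i := hε i hik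
    have h2' : (0:ℝ) ≤ (kt : ℝ) - (i : ℝ) := by
      have : (i:ℝ) ≤ (kt:ℝ) := by exact_mod_cast hik.le
      linarith
    positivity
  have hBnn : (0:ℝ) ≤ ∑ i ∈ Finset.range kr, ζ i * ((kr : ℝ) - (i : ℝ)) * (i : ℝ) := by
    apply Finset.sum_nonneg
    intro i hi
    have hik := Finset.mem_range.mp hi
    have h1' : 0 ≤ ζ i := hζ i hik
    have h2' : (0:ℝ) ≤ (kr : ℝ) - (i : ℝ) := by
      have : (i:ℝ) ≤ (kr:ℝ) := by exact_mod_cast hik.le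
      linarith
    positivity
  have hA0 : ∑ i ∈ Finset.range kt, ε i * ((kt : ℝ) - (i : ℝ)) * (i : ℝ) = 0 := by
    rw [hA, h1]; rw [hB, h2] at hBnn; nlinarith
  have hB0 : ∑ i ∈ Finset.range kr, ζ i * ((kr : ℝ) - (i : ℝ)) * (i : ℝ) = 0 := by
    rw [hB, h2]; rw [hA, h1] at hAnn; nlinarith
  obtain ⟨hε0, hεv⟩ := factored_aux kt hkt ε hε hA0 (kr : ℝ) h1
  obtain ⟨hζ0, hζv⟩ := factored_aux kr hkr ζ hζ hB0 (kt : ℝ) (by rw [h2]; ring)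
  refine ⟨hε0, hζ0, ?_, ?_⟩
  · intro i h1i h2i; exact hεv i h1i (by omega)
  · intro i h1i h2i; exact hζv i h1i (by omega)
end

section
/- Let 1 ≤ k_m ≤ k_t ≤ M and 1 ≤ k_r ≤ N be integers. Then the factored feasible set with k_m transmitters is contained in the hybrid feasible set, i.e. F_fct(k_m,k_r) ⊆ F_hyb(k_t,k_m,k_r). -/
/-- A selection matrix: an `N × M` matrix with entries in `{0,1}`. -/
def IsSelMat {M N : ℕ} (C : Matrix (Fin N) (Fin M) ℕ) : Prop :=
  ∀ i j, C i j = 0 ∨ C i j = 1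

/-- The `i`-th row sum of `C`. -/
def rowSum {M N : ℕ} (C : Matrix (Fin N) (Fin M) ℕ) (i : Fin N) : ℕ := ∑ j, C i j

/-- The `j`-th column sum of `C`. -/
def colSum {M N : ℕ} (C : Matrix (Fin N) (Fin M) ℕ) (j : Fin M) : ℕ := ∑ i, C i j

/-- The total number of ones `|C|`. -/
def totSum {M N : ℕ} (C : Matrix (Fin N) (Fin M) ℕ) : ℕ := ∑ i, ∑ j, C i j

/-- The joint feasible set `F_jnt(k)`: selection matrices with `|C| = k`. -/
def Fjnt (M N : ℕ) (k : ℕ) : Set (Matrix (Fin N) (Fin M) ℕ) :=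
  {C | IsSelMat C ∧ totSum C = k}

/-- The factored feasible set `F_fct(k_t, k_r)`: selection matrices of the form
`C i j = r i * t j` for binary vectors `r` (with `k_r` ones) and `t` (with `k_t` ones). -/
def Ffct (M N : ℕ) (kt kr : ℕ) : Set (Matrix (Fin N) (Fin M) ℕ) :=
  {C | IsSelMat C ∧ ∃ r : Fin N → ℕ, ∃ t : Fin M → ℕ,
      (∀ i, r i = 0 ∨ r i = 1) ∧ (∑ i, r i = kr) ∧
      (∀ j, t j = 0 ∨ t j = 1) ∧ (∑ j, t j = kt) ∧
      ∀ i j, C i j = r i * t j}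

/-- The matched-filter-constrained feasible set `F_mfc(k_m, k_r)`. -/
def Fmfc (M N : ℕ) (km kr : ℕ) : Set (Matrix (Fin N) (Fin M) ℕ) :=
  {C | IsSelMat C ∧ totSum C = km * kr
      ∧ (∑ i, (rowSum C i) ^ 2 = km ^ 2 * kr)
      ∧ (∀ i, rowSum C i ≤ km) ∧ (∀ j, colSum C j ≤ kr)}

/-- The hybrid feasible set `F_hyb(k_t, k_m, k_r)`. -/
def Fhyb (M N : ℕ) (kt km kr : ℕ) : Set (Matrix (Fin N) (Fin M) ℕ) :=
  {C | IsSelMat C ∧ totSum C = km * kr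
      ∧ (((kr : ℝ) * (km : ℝ)) ^ 2 / (kt : ℝ) ≤ ∑ j, ((colSum C j : ℕ) : ℝ) ^ 2)
      ∧ (∑ j, ((colSum C j : ℕ) : ℝ) ^ 2 ≤ (kr : ℝ) ^ 2 * (km : ℝ))
      ∧ (∑ i, (rowSum C i) ^ 2 = km ^ 2 * kr)
      ∧ (∀ i, rowSum C i ≤ km) ∧ (∀ j, colSum C j ≤ kr)}

/-- for `1 ≤ k_m ≤ k_t ≤ M` and `1 ≤ k_r ≤ N`,
`F_fct(k_m, k_r) ⊆ F_hyb(k_t, k_m, k_r)`. -/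
theorem Ffct_subset_Fhyb (M N : ℕ) (hM : 0 < M) (hN : 0 < N)
    (kt km kr : ℕ) (hkm1 : 1 ≤ km) (hkmkt : km ≤ kt) (hktM : kt ≤ M)
    (hkr1 : 1 ≤ kr) (hkrN : kr ≤ N) :
    Ffct M N km kr ⊆ Fhyb M N kt km kr := by
  rintro C ⟨hsel, r, t, hr, hrsum, ht, htsum, hC⟩
  have hrow : ∀ i, rowSum C i = r i * km := by
    intro i
    simp only [rowSum, hC, ← Finset.mul_sum, htsum]
  have hcol : ∀ j, colSum C j = t j * kr := by
    intro j
    simp only [colSum, hC]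
    rw [← Finset.sum_mul, hrsum, mul_comm]
  have hr2 : ∀ i, r i ^ 2 = r i := by
    intro i; rcases hr i with h | h <;> simp [h]
  have ht2 : ∀ j, t j ^ 2 = t j := by
    intro j; rcases ht j with h | h <;> simp [h]
  have hcolsq : (∑ j, ((colSum C j : ℕ) : ℝ) ^ 2) = (km : ℝ) * (kr : ℝ) ^ 2 := by
    have : (∑ j, ((colSum C j : ℕ) : ℝ) ^ 2) = ∑ j, ((t j : ℝ) ^ 2 * (kr : ℝ) ^ 2) := by
      apply Finset.sum_congr rfl
      intro j _; rw [hcol j]; push_cast; ring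
    rw [this]
    have h2 : ∀ j ∈ Finset.univ, ((t j : ℝ) ^ 2 * (kr:ℝ)^2) = (t j : ℝ) * (kr:ℝ)^2 := by
      intro j _
      have := ht2 j
      have : ((t j : ℝ)) ^ 2 = (t j : ℝ) := by exact_mod_cast congrArg (Nat.cast (R := ℝ)) this
      rw [this]
    rw [Finset.sum_congr rfl h2, ← Finset.sum_mul]
    have : (∑ j, (t j : ℝ)) = (km : ℝ) := by exact_mod_cast congrArg (Nat.cast (R := ℝ)) htsum
    rw [this]
  refine ⟨hsel, ?_, ?_, ?_, ?_, ?_, ?_⟩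
  · simp only [totSum, hC, ← Finset.mul_sum, htsum, ← Finset.sum_mul, hrsum]
    ring
  · rw [hcolsq]
    have hkt0 : (0:ℝ) < kt := by exact_mod_cast lt_of_lt_of_le hkm1 hkmkt
    rw [div_le_iff₀ hkt0]
    have h1 : (km : ℝ) ≤ (kt : ℝ) := by exact_mod_cast hkmkt
    have h2 : (0:ℝ) < km := by exact_mod_cast hkm1
    nlinarith [sq_nonneg ((kr:ℝ))]
  · rw [hcolsq]; ring_nf; exact le_refl _
  · have : (∑ i, rowSum C i ^ 2) = ∑ i, r i * km ^ 2 := by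
      apply Finset.sum_congr rfl
      intro i _; rw [hrow i, mul_pow, hr2 i]
    rw [this, ← Finset.sum_mul, hrsum]; ring
  · intro i; rw [hrow i]
    rcases hr i with h | h <;> simp [h]
  · intro j; rw [hcol j]
    rcases ht j with h | h <;> simp [h]
end

section
/- Let 1 ≤ k_m ≤ M and 1 ≤ k_r ≤ N be integers. Then the optimal values of the three selection problems satisfy the ordering: max over C ∈ F_fct(k_m,k_r) of h(C) ≤ max over C ∈ F_mfc(k_m,k_r) of h(C) ≤ max over C ∈ F_jnt(k_m·k_r) of h(C) (all three feasible sets are nonempty and finite, so the maxima exist). -/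
open Matrix in
/-- The vectorization (column stacking) of a selection matrix, as a complex vector of
length `M·N`: entry `C i j` sits at position `finProdFinEquiv (j, i)`. -/
noncomputable def selVec {M N : ℕ} (C : Matrix (Fin N) (Fin M) ℕ) : Fin (M * N) → ℂ :=
  fun k => ((C (finProdFinEquiv.symm k).2 (finProdFinEquiv.symm k).1 : ℕ) : ℂ)

open Matrix in
/-- The objective `h(C) = Re det(A_sᴴ D_C A_s + B_s) / Re det(A_jcᴴ D_C A_jc + B_jc)`,
where `D_C` is the diagonal matrix whose diagonal is the vectorization of `C`. -/
noncomputable def objH {M N n : ℕ}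
    (As : Matrix (Fin (M * N)) (Fin (n + 1)) ℂ)
    (Ajc : Matrix (Fin (M * N)) (Fin n) ℂ)
    (Bs : Matrix (Fin (n + 1)) (Fin (n + 1)) ℂ)
    (Bjc : Matrix (Fin n) (Fin n) ℂ)
    (C : Matrix (Fin N) (Fin M) ℕ) : ℝ :=
  (Matrix.det (Asᴴ * Matrix.diagonal (selVec C) * As + Bs)).re /
    (Matrix.det (Ajcᴴ * Matrix.diagonal (selVec C) * Ajc + Bjc)).re

open ComplexOrder in
/-- ordering of optimal values
`max_{F_fct(k_m,k_r)} h ≤ max_{F_mfc(k_m,k_r)} h ≤ max_{F_jnt(k_m·k_r)} h`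
(the maxima, which exist since the feasible sets are nonempty and finite, are phrased via
`IsGreatest`). -/
theorem factored_le_mfc_le_joint (M N : ℕ) (hM : 0 < M) (hN : 0 < N)
    (km kr : ℕ) (hkm1 : 1 ≤ km) (hkmM : km ≤ M) (hkr1 : 1 ≤ kr) (hkrN : kr ≤ N)
    (n : ℕ) (hn : 0 < n)
    (As : Matrix (Fin (M * N)) (Fin (n + 1)) ℂ)
    (Ajc : Matrix (Fin (M * N)) (Fin n) ℂ)
    (Bs : Matrix (Fin (n + 1)) (Fin (n + 1)) ℂ)
    (Bjc : Matrix (Fin n) (Fin n) ℂ)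
    (hBs : Bs.PosSemidef) (hBjc : Bjc.PosDef)
    (mFct mMfc mJnt : ℝ)
    (hFct : IsGreatest (objH As Ajc Bs Bjc '' Ffct M N km kr) mFct)
    (hMfc : IsGreatest (objH As Ajc Bs Bjc '' Fmfc M N km kr) mMfc)
    (hJnt : IsGreatest (objH As Ajc Bs Bjc '' Fjnt M N (km * kr)) mJnt) :
    mFct ≤ mMfc ∧ mMfc ≤ mJnt := by
  have hsub1 : Ffct M N km kr ⊆ Fmfc M N km kr := by
    rintro C ⟨hsel, r, t, hr01, hrsum, ht01, htsum, hC⟩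
    have hrow : ∀ i, rowSum C i = r i * km := by
      intro i
      simp only [rowSum, hC, ← Finset.mul_sum, htsum]
    have hcol : ∀ j, colSum C j = t j * kr := by
      intro j
      simp only [colSum, hC]
      rw [← Finset.sum_mul, hrsum, mul_comm]
    refine ⟨hsel, ?_, ?_, ?_, ?_⟩
    · simp only [totSum]
      have : ∀ i, ∑ j, C i j = rowSum C i := fun i => rfl
      simp only [this, hrow, ← Finset.sum_mul, hrsum]
      ring
    · have hsq : ∀ i, (r i) ^ 2 = r i := by
        intro i; rcases hr01 i with h | h <;> simp [h]
      simp only [hrow, mul_pow, ← Finset.sum_mul, hsq, hrsum]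
      ring
    · intro i
      rw [hrow i]
      rcases hr01 i with h | h <;> simp [h]
    · intro j
      rw [hcol j]
      rcases ht01 j with h | h <;> simp [h]
  have hsub2 : Fmfc M N km kr ⊆ Fjnt M N (km * kr) := by
    rintro C ⟨hsel, htot, _⟩
    exact ⟨hsel, htot⟩
  constructor
  · obtain ⟨x, hx, hxe⟩ := hFct.1
    exact hxe ▸ hMfc.2 ⟨x, hsub1 hx, rfl⟩
  · obtain ⟨x, hx, hxe⟩ := hMfc.1
    exact hxe ▸ hJnt.2 ⟨x, hsub2 hx, rfl⟩
end

section
/- Let 1 ≤ k_m ≤ k_t ≤ M and 1 ≤ k_r ≤ N be integers. Then the optimal values of the three selection problems satisfy the ordering: max over C ∈ F_fct(k_m,k_r) of h(C) ≤ max over C ∈ F_hyb(k_t,k_m,k_r) of h(C) ≤ max over C ∈ F_mfc(k_m,k_r) of h(C) (all three feasible sets are nonempty and finite, so the maxima exist). -/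
lemma hyb_sub_mfc (M N kt km kr : ℕ) :
    Fhyb M N kt km kr ⊆ Fmfc M N km kr := by
  rintro C ⟨hsel, ht, _, _, hrsq, hrow, hcol⟩
  exact ⟨hsel, ht, hrsq, hrow, hcol⟩

lemma fct_sub_hyb (M N kt km kr : ℕ) (hkm1 : 1 ≤ km) (hkmkt : km ≤ kt) :
    Ffct M N km kr ⊆ Fhyb M N kt km kr := by
  rintro C ⟨hsel, r, t, hr, hrs, ht, hts, hC⟩
  have hktpos : (0:ℝ) < kt := by
    have : 1 ≤ kt := le_trans hkm1 hkmkt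
    exact_mod_cast this
  have hrow : ∀ i, rowSum C i = r i * km := by
    intro i; simp only [rowSum, hC, ← Finset.mul_sum, hts]
  have hcol : ∀ j, colSum C j = kr * t j := by
    intro j; simp only [colSum, hC, ← Finset.sum_mul, hrs]
  have hr2 : ∀ i, r i ^ 2 = r i := by
    intro i; rcases hr i with h | h <;> simp [h]
  have ht2 : ∀ j, t j ^ 2 = t j := by
    intro j; rcases ht j with h | h <;> simp [h]
  have hcolsq : ∑ j, (colSum C j) ^ 2 = kr ^ 2 * km := by
    calc ∑ j, (colSum C j) ^ 2 = ∑ j, kr ^ 2 * t j := by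
          refine Finset.sum_congr rfl fun j _ => ?_
          rw [hcol j, mul_pow, ht2 j]
      _ = kr ^ 2 * km := by rw [← Finset.mul_sum, hts]
  have hcolsqR : ∑ j, ((colSum C j : ℕ) : ℝ) ^ 2 = (kr:ℝ) ^ 2 * km := by
    exact_mod_cast congrArg (Nat.cast : ℕ → ℝ) hcolsq
  refine ⟨hsel, ?_, ?_, ?_, ?_, ?_, ?_⟩
  · -- totSum
    simp only [totSum, hC, ← Finset.mul_sum, hts, ← Finset.sum_mul, hrs]
    ring
  · rw [hcolsqR, div_le_iff₀ hktpos]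
    have hmk : (km:ℝ) ≤ kt := by exact_mod_cast hkmkt
    have hkm0 : (0:ℝ) ≤ km := by positivity
    have hkr0 : (0:ℝ) ≤ (kr:ℝ)^2 := by positivity
    have h1 : (km:ℝ)*km ≤ km*kt := mul_le_mul_of_nonneg_left hmk hkm0
    calc ((kr:ℝ)*km)^2 = (kr:ℝ)^2*((km:ℝ)*km) := by ring
      _ ≤ (kr:ℝ)^2*((km:ℝ)*kt) := mul_le_mul_of_nonneg_left h1 hkr0
      _ = (kr:ℝ)^2*km*kt := by ring
  · rw [hcolsqR]
  · calc ∑ i, (rowSum C i) ^ 2 = ∑ i, r i * km ^ 2 := by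
          refine Finset.sum_congr rfl fun i _ => ?_
          rw [hrow i, mul_pow, hr2 i]
      _ = km ^ 2 * kr := by rw [← Finset.sum_mul, hrs]; ring
  · intro i
    rw [hrow i]
    rcases hr i with h | h <;> simp [h]
  · intro j
    rw [hcol j]
    rcases ht j with h | h <;> simp [h]

open ComplexOrder in
/-- for `1 ≤ k_m ≤ k_t ≤ M` and `1 ≤ k_r ≤ N`, ordering of optimal values
`max_{F_fct(k_m,k_r)} h ≤ max_{F_hyb(k_t,k_m,k_r)} h ≤ max_{F_mfc(k_m,k_r)} h`
(the maxima, which exist since the feasible sets are nonempty and finite, are phrased via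
`IsGreatest`). -/
theorem factored_le_hybrid_le_mfc (M N : ℕ) (hM : 0 < M) (hN : 0 < N)
    (kt km kr : ℕ) (hkm1 : 1 ≤ km) (hkmkt : km ≤ kt) (hktM : kt ≤ M)
    (hkr1 : 1 ≤ kr) (hkrN : kr ≤ N)
    (n : ℕ) (hn : 0 < n)
    (As : Matrix (Fin (M * N)) (Fin (n + 1)) ℂ)
    (Ajc : Matrix (Fin (M * N)) (Fin n) ℂ)
    (Bs : Matrix (Fin (n + 1)) (Fin (n + 1)) ℂ)
    (Bjc : Matrix (Fin n) (Fin n) ℂ)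
    (hBs : Bs.PosSemidef) (hBjc : Bjc.PosDef)
    (mFct mHyb mMfc : ℝ)
    (hFct : IsGreatest (objH As Ajc Bs Bjc '' Ffct M N km kr) mFct)
    (hHyb : IsGreatest (objH As Ajc Bs Bjc '' Fhyb M N kt km kr) mHyb)
    (hMfc : IsGreatest (objH As Ajc Bs Bjc '' Fmfc M N km kr) mMfc) :
    mFct ≤ mHyb ∧ mHyb ≤ mMfc := by
  constructor
  · obtain ⟨C, hC, hval⟩ := hFct.1
    rw [← hval]
    exact hHyb.2 ⟨C, fct_sub_hyb M N kt km kr hkm1 hkmkt hC, rfl⟩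
  · obtain ⟨C, hC, hval⟩ := hHyb.1
    rw [← hval]
    exact hMfc.2 ⟨C, hyb_sub_mfc M N kt km kr hC, rfl⟩
end

section
/- Let P be an m×m Hermitian positive definite complex matrix, A a p×m complex matrix, a ∈ ℂᵖ, and σ > 0 a real number. Set R = A·P·Aᴴ + σ²·I_p and B = σ²·P⁻¹, let Ã = [a A] be the p×(m+1) matrix whose first column is a and whose remaining columns are A, and let B̃ be the (m+1)×(m+1) block-diagonal matrix with top-left scalar block 0 and bottom-right block B. Then R is invertible and aᴴ·R⁻¹·a = σ⁻² · det(Ãᴴ·Ã + B̃) / det(Aᴴ·A + B). -/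
/-!
The push-through identity `R A = A P (Aᴴ A + σ² P⁻¹)` gives the inverse
`R⁻¹ = σ⁻² (I - A M⁻¹ Aᴴ)` with `M = Aᴴ A + B`. On the other side, `Ãᴴ Ã + B̃` is the matrix
`M` bordered by the row `aᴴ A`, the column `Aᴴ a` and the corner `aᴴ a`, so its Schur complement
with respect to `M` gives `det (Ãᴴ Ã + B̃) = det M · aᴴ (I - A M⁻¹ Aᴴ) a`.
-/

namespace Matrix

variable {K : Type*} [Field K] {n p : Type*} [Fintype n] [DecidableEq n] [Fintype p] [DecidableEq p]

theorem mul_mul_add_smul_one_mul_eq_one (A : Matrix p n K) (P : Matrix n n K) (C : Matrix n p K)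
    {s : K} (hs : s ≠ 0) (hP : IsUnit P) (hM : IsUnit (C * A + s • P⁻¹)) :
    (A * P * C + s • 1) * (s⁻¹ • (1 - A * (C * A + s • P⁻¹)⁻¹ * C)) = 1 := by
  set M := C * A + s • P⁻¹
  have push_through : (A * P * C + s • 1) * A = A * P * M := by
    rw [Matrix.add_mul, Matrix.mul_add, Matrix.mul_smul, Matrix.mul_assoc A P P⁻¹,
      mul_nonsing_inv _ ((isUnit_iff_isUnit_det P).mp hP), Matrix.smul_mul, Matrix.one_mul,
      Matrix.mul_one, Matrix.mul_assoc _ C]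
  have : (A * P * C + s • 1) * (A * M⁻¹ * C) = A * P * C := by
    rw [← Matrix.mul_assoc, ← Matrix.mul_assoc, push_through, Matrix.mul_assoc (A * P) M,
      mul_nonsing_inv _ ((isUnit_iff_isUnit_det M).mp hM), Matrix.mul_one]
  rw [Matrix.mul_smul, Matrix.mul_sub, this, Matrix.mul_one, add_sub_cancel_left, smul_smul,
    inv_mul_cancel₀ hs, one_smul]

theorem det_fromBlocks_unit₁₁ (x : K) (w v : n → K) (D : Matrix n n K) (hD : IsUnit D) :
    (fromBlocks (of fun _ _ : Unit => x) (replicateRow Unit w) (replicateCol Unit v) D).det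
      = D.det * (x - w ⬝ᵥ (D⁻¹ *ᵥ v)) := by
  have := hD.invertible
  rw [det_fromBlocks₂₂, invOf_eq_nonsing_inv, det_unique (n := Unit), Matrix.mul_assoc,
    ← replicateCol_mulVec]
  rfl

theorem det_conjTranspose_fromCols_mul_add_fromBlocks [StarRing K] (v : p → K)
    (A : Matrix p n K) (B : Matrix n n K) (hM : IsUnit (Aᴴ * A + B)) :
    ((fromCols (replicateCol Unit v) A)ᴴ * fromCols (replicateCol Unit v) A
        + fromBlocks 0 0 0 B).det
      = (Aᴴ * A + B).det * (star v ⬝ᵥ ((1 - A * (Aᴴ * A + B)⁻¹ * Aᴴ) *ᵥ v)) := by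
  rw [conjTranspose_fromCols_eq_fromRows_conjTranspose, fromRows_mul_fromCols, fromBlocks_add,
    add_zero, add_zero, add_zero, conjTranspose_replicateCol, replicateRow_mul_replicateCol,
    ← replicateRow_vecMul, ← replicateCol_mulVec, det_fromBlocks_unit₁₁ _ _ _ _ hM, sub_mulVec,
    one_mulVec, dotProduct_sub]
  simp only [← mulVec_mulVec, dotProduct_mulVec]

end Matrix

open Matrix ComplexOrder in
/-- with `R = A·P·Aᴴ + σ²·I`, `B = σ²·P⁻¹`, `Ã = [a A]` (first column `a`,
remaining columns `A`; columns indexed by `Unit ⊕ Fin m`, a type of cardinality `m+1`)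
and `B̃ = blockdiag(0, B)`, the matrix `R` is invertible and
`aᴴ·R⁻¹·a = σ⁻²·det(Ãᴴ·Ã + B̃)/det(Aᴴ·A + B)`. -/
theorem quadratic_form_det_ratio (m p : ℕ)
    (P : Matrix (Fin m) (Fin m) ℂ) (hP : P.PosDef)
    (A : Matrix (Fin p) (Fin m) ℂ) (a : Fin p → ℂ) (σ : ℝ) (hσ : 0 < σ)
    (R : Matrix (Fin p) (Fin p) ℂ)
    (hR : R = A * P * Aᴴ + ((σ : ℂ) ^ 2) • (1 : Matrix (Fin p) (Fin p) ℂ))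
    (B : Matrix (Fin m) (Fin m) ℂ) (hB : B = ((σ : ℂ) ^ 2) • P⁻¹)
    (Atil : Matrix (Fin p) (Unit ⊕ Fin m) ℂ)
    (hAtil : ∀ i s, Atil i s = Sum.elim (fun _ : Unit => a i) (fun j => A i j) s)
    (Btil : Matrix (Unit ⊕ Fin m) (Unit ⊕ Fin m) ℂ)
    (hBtil : Btil = Matrix.fromBlocks (0 : Matrix Unit Unit ℂ) 0 0 B) :
    IsUnit R
    ∧ star a ⬝ᵥ (R⁻¹ *ᵥ a)
        = ((σ : ℂ) ^ 2)⁻¹ * (Atilᴴ * Atil + Btil).det / (Aᴴ * A + B).det := by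
  have hσ2 : (0 : ℂ) < (σ : ℂ) ^ 2 := by positivity
  have hM : (Aᴴ * A + B).PosDef :=
    .posSemidef_add (posSemidef_conjTranspose_mul_self A) (hB ▸ hP.inv.smul hσ2)
  have hR_mul := mul_mul_add_smul_one_mul_eq_one A P Aᴴ hσ2.ne' hP.isUnit (hB ▸ hM.isUnit)
  rw [← hR, ← hB] at hR_mul
  have hAtil_fromCols : Atil = fromCols (replicateCol Unit a) A := by
    ext i (_ | j) <;> simp [hAtil]
  refine ⟨(isUnit_iff_isUnit_det R).mpr (isUnit_det_of_right_inverse hR_mul), ?_⟩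
  rw [inv_eq_right_inv hR_mul, hAtil_fromCols, hBtil,
    det_conjTranspose_fromCols_mul_add_fromBlocks a A B hM.isUnit, smul_mulVec, dotProduct_smul,
    smul_eq_mul]
  field_simp [hM.det_pos.ne']
end
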